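/- In the CHSH Bell-test configuration with trial model the set of non-signaling distributions with fixed input distribution P(XY) (all P(x,y) > 0), for any ν with Ê = E_ν(I_CHSH) ∈ (2,4], the single-trial guessing probability P_guess(AB|XYE) = max{ Σ_e ω_e max_{ab} σ_e(ab|xy) } over convex decompositions ν = Σ_e ω_e σ_e into non-signaling distributions equals (6 − Ê)/4, independently of the input (x,y); hence H_min(AB|XYE) = −log₂((6 − Ê)/4). -/

import Mathlib

/-!
Write `c(ab|xy) = ν(abxy)/P(xy)` and `E(c)` for its CHSH value. Every normalised no-signalling `c`
satisfies the affine identity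
`c = (E(c) - 2)/2 · PR + ∑_{l losing} c(l) · D_l`,
where `PR` is the PR box and `D_l` is the deterministic strategy producing the losing entry `l`
and winning on the other three inputs: both sides are affine in `c` and agree on these nine
extreme behaviours, which affinely span the no-signalling space. When `E(c) ≥ 2` all weights are
nonnegative, so this is a convex decomposition whose guessing probability is
`(E - 2)/2 · 1/2 + (4 - E)/2 · 1 = (6 - E)/4`. The same identity gives `4 c(ab|xy) + E(c) ≤ 6`
for every no-signalling box with `E(c) ≥ 2` (for `E(c) ≤ 2` it is trivial), and since `E` is
linear no decomposition of `ν` does better.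
-/

namespace CHSH18

/-- The set of non-signaling distributions of `(A,B,X,Y)` with fixed input
distribution `PXY`. -/
def NS (PXY : Fin 2 × Fin 2 → ℝ) : Set (Fin 2 × Fin 2 × Fin 2 × Fin 2 → ℝ) :=
  {ν | (∀ d, 0 ≤ ν d) ∧
    (∀ x y : Fin 2, ∑ a : Fin 2, ∑ b : Fin 2, ν (a, b, x, y) = PXY (x, y)) ∧
    (∀ a x y y' : Fin 2, ∑ b : Fin 2, ν (a, b, x, y) / PXY (x, y) =
      ∑ b : Fin 2, ν (a, b, x, y') / PXY (x, y')) ∧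
    (∀ b x x' y : Fin 2, ∑ a : Fin 2, ν (a, b, x, y) / PXY (x, y) =
      ∑ a : Fin 2, ν (a, b, x', y) / PXY (x', y))}

/-- The CHSH Bell function `I_CHSH(a,b,x,y) = (1−2xy)(−1)^{a+b}/P(x,y)`. -/
noncomputable def chsh (PXY : Fin 2 × Fin 2 → ℝ)
    (d : Fin 2 × Fin 2 × Fin 2 × Fin 2) : ℝ :=
  (1 - 2 * ((d.2.2.1 : ℕ) : ℝ) * ((d.2.2.2 : ℕ) : ℝ)) *
    (-1 : ℝ) ^ ((d.1 : ℕ) + (d.2.1 : ℕ)) / PXY d.2.2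

open Finset

/-- `c (a, b, x, y)` stands for `p(ab|xy)`. Positivity is kept separate because the decomposition
identity `IsNonSignaling.eq_decomposition` is affine in `c`. -/
structure IsNonSignaling (c : Fin 2 × Fin 2 × Fin 2 × Fin 2 → ℝ) : Prop where
  sum_eq_one : ∀ x y, ∑ a, ∑ b, c (a, b, x, y) = 1
  alice_marginal : ∀ a x y y', ∑ b, c (a, b, x, y) = ∑ b, c (a, b, x, y')
  bob_marginal : ∀ b x x' y, ∑ a, c (a, b, x, y) = ∑ a, c (a, b, x', y)

def correlator (c : Fin 2 × Fin 2 × Fin 2 × Fin 2 → ℝ) (x y : Fin 2) : ℝ :=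
  c (0, 0, x, y) - c (0, 1, x, y) - c (1, 0, x, y) + c (1, 1, x, y)

def chshValue (c : Fin 2 × Fin 2 × Fin 2 × Fin 2 → ℝ) : ℝ :=
  correlator c 0 0 + correlator c 0 1 + correlator c 1 0 - correlator c 1 1

abbrev IsWin (d : Fin 2 × Fin 2 × Fin 2 × Fin 2) : Prop := d.1 + d.2.1 = d.2.2.1 * d.2.2.2

noncomputable def prBox (d : Fin 2 × Fin 2 × Fin 2 × Fin 2) : ℝ := if IsWin d then 1 / 2 else 0

def detBox (f g : Fin 2 → Fin 2) (d : Fin 2 × Fin 2 × Fin 2 × Fin 2) : ℝ :=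
  if d.1 = f d.2.2.1 ∧ d.2.1 = g d.2.2.2 then 1 else 0

def losses : Finset (Fin 2 × Fin 2 × Fin 2 × Fin 2) := {l | ¬ IsWin l}

/-- For a losing entry `l`, the deterministic strategy that answers `l` on the inputs of `l` and
wins the CHSH game on the other three inputs (on the input pair opposite to `l` it wins
automatically). -/
def lossAlice (l : Fin 2 × Fin 2 × Fin 2 × Fin 2) (x : Fin 2) : Fin 2 :=
  if x = l.2.2.1 then l.1 else l.2.1 + x * l.2.2.2

def lossBob (l : Fin 2 × Fin 2 × Fin 2 × Fin 2) (y : Fin 2) : Fin 2 :=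
  if y = l.2.2.2 then l.2.1 else l.1 + l.2.2.1 * y

theorem prBox_le_half (d : Fin 2 × Fin 2 × Fin 2 × Fin 2) : prBox d ≤ 1 / 2 := by
  unfold prBox; split_ifs <;> norm_num

theorem detBox_le_one (f g : Fin 2 → Fin 2) (d : Fin 2 × Fin 2 × Fin 2 × Fin 2) :
    detBox f g d ≤ 1 := by
  unfold detBox; split_ifs <;> norm_num

theorem isNonSignaling_prBox : IsNonSignaling prBox := by
  have row : ∀ a x y : Fin 2, ∑ b, prBox (a, b, x, y) = 1 / 2 := by
    intro a x y
    fin_cases a <;> fin_cases x <;> fin_cases y <;> simp [prBox, IsWin, Fin.sum_univ_two]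
  have col : ∀ b x y : Fin 2, ∑ a, prBox (a, b, x, y) = 1 / 2 := by
    intro b x y
    fin_cases b <;> fin_cases x <;> fin_cases y <;> simp [prBox, IsWin, Fin.sum_univ_two]
  refine ⟨fun x y => ?_, fun a x y y' => by rw [row, row], fun b x x' y => by rw [col, col]⟩
  simp only [row, sum_const, card_univ, Fintype.card_fin]
  norm_num

theorem isNonSignaling_detBox (f g : Fin 2 → Fin 2) : IsNonSignaling (detBox f g) := by
  have row : ∀ a x y : Fin 2, ∑ b, detBox f g (a, b, x, y) = if a = f x then 1 else 0 := by
    intro a x y; by_cases h : a = f x <;> simp [detBox, h]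
  have col : ∀ b x y : Fin 2, ∑ a, detBox f g (a, b, x, y) = if b = g y then 1 else 0 := by
    intro b x y; by_cases h : b = g y <;> simp [detBox, h]
  exact ⟨fun x y => by simp [row], fun a x y y' => by rw [row, row],
    fun b x x' y => by rw [col, col]⟩

variable {c : Fin 2 × Fin 2 × Fin 2 × Fin 2 → ℝ}

theorem IsNonSignaling.le_one (hc : IsNonSignaling c) (hc0 : ∀ d, 0 ≤ c d)
    (d : Fin 2 × Fin 2 × Fin 2 × Fin 2) : c d ≤ 1 := by
  obtain ⟨a, b, x, y⟩ := d
  calc c (a, b, x, y) ≤ ∑ b', c (a, b', x, y) :=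
        single_le_sum (fun b' _ => hc0 (a, b', x, y)) (mem_univ b)
    _ ≤ ∑ a', ∑ b', c (a', b', x, y) :=
        single_le_sum (f := fun a' => ∑ b', c (a', b', x, y))
          (fun a' _ => sum_nonneg fun b' _ => hc0 (a', b', x, y)) (mem_univ a)
    _ = 1 := hc.sum_eq_one x y

theorem IsNonSignaling.sum_losses (hc : IsNonSignaling c) :
    ∑ l ∈ losses, c l = (4 - chshValue c) / 2 := by
  have h := hc.sum_eq_one
  simp only [Fin.sum_univ_two] at h
  rw [losses, sum_filter]
  simp only [ne_eq, ite_not, Fintype.sum_prod_type, Fin.sum_univ_two, Fin.isValue, Fin.reduceAdd,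
    Fin.reduceMul, Fin.reduceEq, ite_true, ite_false, add_zero, zero_add, chshValue, correlator]
  linarith [h 0 0, h 0 1, h 1 0, h 1 1]

theorem IsNonSignaling.eq_decomposition (hc : IsNonSignaling c)
    (d : Fin 2 × Fin 2 × Fin 2 × Fin 2) :
    c d = (chshValue c - 2) / 2 * prBox d +
      ∑ l ∈ losses, c l * detBox (lossAlice l) (lossBob l) d := by
  have h := hc.sum_eq_one
  have hA := hc.alice_marginal
  have hB := hc.bob_marginal
  simp only [Fin.sum_univ_two] at h hA hB
  obtain ⟨a, b, x, y⟩ := d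
  rw [losses, sum_filter]
  fin_cases a <;> fin_cases b <;> fin_cases x <;> fin_cases y <;>
    simp only [Fintype.sum_prod_type, Fin.sum_univ_two, chshValue, correlator, prBox, detBox,
      lossAlice, lossBob, IsWin, Fin.isValue, Fin.zero_eta, Fin.mk_one, Fin.reduceAdd,
      Fin.reduceEq, ite_not, ite_true, ite_false, and_self, and_true, and_false,
      mul_ite, mul_one, mul_zero, add_zero, zero_add] <;>
  linarith [h 0 0, h 0 1, h 1 0, h 1 1, hA 0 0 0 1, hA 0 1 0 1, hA 1 0 0 1, hA 1 1 0 1,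
    hB 0 0 1 0, hB 0 0 1 1, hB 1 0 1 0, hB 1 0 1 1]

theorem IsNonSignaling.four_mul_add_chshValue_le (hc : IsNonSignaling c) (hc0 : ∀ d, 0 ≤ c d)
    (d : Fin 2 × Fin 2 × Fin 2 × Fin 2) : 4 * c d + chshValue c ≤ 6 := by
  rcases le_total (chshValue c) 2 with hE | hE
  · linarith [hc.le_one hc0 d]
  have hpr : (chshValue c - 2) / 2 * prBox d ≤ (chshValue c - 2) / 2 * (1 / 2) :=
    mul_le_mul_of_nonneg_left (prBox_le_half d) (by linarith)
  have hdet : ∑ l ∈ losses, c l * detBox (lossAlice l) (lossBob l) d ≤ ∑ l ∈ losses, c l :=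
    sum_le_sum fun l _ => mul_le_of_le_one_right (hc0 l) (detBox_le_one _ _ d)
  linarith [hc.eq_decomposition d, hc.sum_losses]

variable {P : Fin 2 × Fin 2 → ℝ} {ν σ : Fin 2 × Fin 2 × Fin 2 × Fin 2 → ℝ}

noncomputable def conditional (P : Fin 2 × Fin 2 → ℝ) (ν : Fin 2 × Fin 2 × Fin 2 × Fin 2 → ℝ)
    (d : Fin 2 × Fin 2 × Fin 2 × Fin 2) : ℝ :=
  ν d / P d.2.2

def joint (P : Fin 2 × Fin 2 → ℝ) (c : Fin 2 × Fin 2 × Fin 2 × Fin 2 → ℝ)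
    (d : Fin 2 × Fin 2 × Fin 2 × Fin 2) : ℝ :=
  P d.2.2 * c d

theorem conditional_nonneg (hP : ∀ q, 0 < P q) (hν : ν ∈ NS P)
    (d : Fin 2 × Fin 2 × Fin 2 × Fin 2) : 0 ≤ conditional P ν d :=
  div_nonneg (hν.1 d) (hP _).le

theorem isNonSignaling_conditional (hP : ∀ q, 0 < P q) (hν : ν ∈ NS P) :
    IsNonSignaling (conditional P ν) := by
  refine ⟨fun x y => ?_, hν.2.2.1, hν.2.2.2⟩
  simp only [conditional, ← sum_div]
  rw [hν.2.1, div_self (hP _).ne']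

theorem joint_mem_NS (hP : ∀ q, 0 < P q) (hc : IsNonSignaling c) (hc0 : ∀ d, 0 ≤ c d) :
    joint P c ∈ NS P := by
  have hcancel : ∀ d : Fin 2 × Fin 2 × Fin 2 × Fin 2, joint P c d / P d.2.2 = c d :=
    fun d => mul_div_cancel_left₀ _ (hP _).ne'
  refine ⟨fun d => mul_nonneg (hP _).le (hc0 d), fun x y => ?_, fun a x y y' => ?_,
    fun b x x' y => ?_⟩
  · simp only [joint, ← mul_sum, hc.sum_eq_one, mul_one]
  · simpa only [hcancel] using hc.alice_marginal a x y y'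
  · simpa only [hcancel] using hc.bob_marginal b x x' y

theorem joint_conditional (hP : ∀ q, 0 < P q) : joint P (conditional P ν) = ν :=
  funext fun _ => mul_div_cancel₀ _ (hP _).ne'

theorem sum_mul_chsh (ν : Fin 2 × Fin 2 × Fin 2 × Fin 2 → ℝ) :
    ∑ d, ν d * chsh P d = chshValue (conditional P ν) := by
  simp only [chsh, conditional, chshValue, correlator, Fintype.sum_prod_type, Fin.sum_univ_two,
    Fin.isValue, Fin.coe_ofNat_eq_mod, Nat.zero_mod, Nat.mod_succ, CharP.cast_eq_zero, Nat.cast_one,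
    Nat.reduceAdd, mul_zero, sub_zero, one_mul, mul_one, add_zero, zero_add, pow_zero, pow_one,
    even_two, Even.neg_pow, one_pow]
  ring

noncomputable def guessProb (P : Fin 2 × Fin 2 → ℝ) (σ : Fin 2 × Fin 2 × Fin 2 × Fin 2 → ℝ)
    (x y : Fin 2) : ℝ :=
  ⨆ ab : Fin 2 × Fin 2, σ (ab.1, ab.2, x, y) / P (x, y)

def guessSet (P : Fin 2 × Fin 2 → ℝ) (ν : Fin 2 × Fin 2 × Fin 2 × Fin 2 → ℝ) (x y : Fin 2) :
    Set ℝ :=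
  {r | ∃ (ω : ℕ → ℝ) (σe : ℕ → Fin 2 × Fin 2 × Fin 2 × Fin 2 → ℝ),
    (∀ e, 0 ≤ ω e) ∧ (∀ e, σe e ∈ NS P) ∧ (∑' e, ω e) = 1 ∧
    (∀ d, ∑' e, ω e * σe e d = ν d) ∧ r = ∑' e, ω e * guessProb P (σe e) x y}

theorem guessProb_nonneg (hP : ∀ q, 0 < P q) (hσ : σ ∈ NS P) (x y : Fin 2) :
    0 ≤ guessProb P σ x y :=
  le_ciSup_of_le (Set.finite_range _).bddAbove (0, 0) (conditional_nonneg hP hσ (0, 0, x, y))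

theorem guessProb_le (hP : ∀ q, 0 < P q) (hσ : σ ∈ NS P) (x y : Fin 2) :
    guessProb P σ x y ≤ (6 - ∑ d, σ d * chsh P d) / 4 := by
  refine ciSup_le fun ab => ?_
  have := (isNonSignaling_conditional hP hσ).four_mul_add_chshValue_le
    (conditional_nonneg hP hσ) (ab.1, ab.2, x, y)
  rw [sum_mul_chsh]
  change conditional P σ (ab.1, ab.2, x, y) ≤ _
  linarith

theorem guessProb_joint (hP : ∀ q, 0 < P q) (c : Fin 2 × Fin 2 × Fin 2 × Fin 2 → ℝ)
    (x y : Fin 2) : guessProb P (joint P c) x y = ⨆ ab : Fin 2 × Fin 2, c (ab.1, ab.2, x, y) := by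
  simp only [guessProb, joint, mul_div_cancel_left₀ _ (hP _).ne']

theorem iSup_prBox (x y : Fin 2) : ⨆ ab : Fin 2 × Fin 2, prBox (ab.1, ab.2, x, y) = 1 / 2 :=
  le_antisymm (ciSup_le fun _ => prBox_le_half _)
    (le_ciSup_of_le (Set.finite_range _).bddAbove (0, x * y) (by simp [prBox]))

theorem iSup_detBox (f g : Fin 2 → Fin 2) (x y : Fin 2) :
    ⨆ ab : Fin 2 × Fin 2, detBox f g (ab.1, ab.2, x, y) = 1 :=
  le_antisymm (ciSup_le fun _ => detBox_le_one _ _ _)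
    (le_ciSup_of_le (Set.finite_range _).bddAbove (f x, g y) (by simp [detBox]))

theorem hasSum_mul_sum_mul {α : Type*} [Fintype α] {ω : ℕ → ℝ} {σ : ℕ → α → ℝ}
    (hs : ∀ d, Summable fun e => ω e * σ e d) (w : α → ℝ) :
    HasSum (fun e => ω e * ∑ d, σ e d * w d) (∑ d, (∑' e, ω e * σ e d) * w d) := by
  simp only [mul_sum, ← mul_assoc]
  exact hasSum_sum fun d _ => (hs d).hasSum.mul_right (w d)

theorem le_of_mem_guessSet (hP : ∀ q, 0 < P q) {x y : Fin 2} {r : ℝ}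
    (hr : r ∈ guessSet P ν x y) : r ≤ (6 - ∑ d, ν d * chsh P d) / 4 := by
  obtain ⟨ω, σ, hω0, hσ, hω1, hων, rfl⟩ := hr
  have hω : HasSum ω 1 := by
    refine hω1 ▸ (Summable.hasSum ?_)
    by_contra h
    simp [tsum_eq_zero_of_not_summable h] at hω1
  have hσP : ∀ e d, σ e d ≤ P d.2.2 := fun e d =>
    (div_le_one (hP _)).1 ((isNonSignaling_conditional hP (hσ e)).le_one
      (conditional_nonneg hP (hσ e)) d)
  have hs : ∀ d, Summable fun e => ω e * σ e d := fun d =>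
    Summable.of_nonneg_of_le (fun e => mul_nonneg (hω0 e) ((hσ e).1 d))
      (fun e => mul_le_mul_of_nonneg_left (hσP e d) (hω0 e)) (hω.summable.mul_right _)
  have hE := hasSum_mul_sum_mul hs (chsh P)
  simp only [hων] at hE
  have hbound : HasSum (fun e => ω e * ((6 - ∑ d, σ e d * chsh P d) / 4))
      ((6 - ∑ d, ν d * chsh P d) / 4) := by
    have h := (hω.mul_left (3 / 2)).sub (hE.mul_left (1 / 4))
    rw [show 3 / 2 * 1 - 1 / 4 * ∑ d, ν d * chsh P d = (6 - ∑ d, ν d * chsh P d) / 4 by ring] at h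
    exact h.congr_fun fun e => by ring
  have hle : ∀ e, ω e * guessProb P (σ e) x y ≤ ω e * ((6 - ∑ d, σ e d * chsh P d) / 4) :=
    fun e => mul_le_mul_of_nonneg_left (guessProb_le hP (hσ e) x y) (hω0 e)
  rw [← hbound.tsum_eq]
  exact Summable.tsum_le_tsum hle (Summable.of_nonneg_of_le
    (fun e => mul_nonneg (hω0 e) (guessProb_nonneg hP (hσ e) x y)) hle hbound.summable)
    hbound.summable

theorem mem_guessSet_of_fintype {ι : Type*} [Fintype ι] (w : ι → ℝ)
    (τ : ι → Fin 2 × Fin 2 × Fin 2 × Fin 2 → ℝ) (hw0 : ∀ i, 0 ≤ w i) (hτ : ∀ i, τ i ∈ NS P)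
    (hw1 : ∑ i, w i = 1) (hwν : ∀ d, ∑ i, w i * τ i d = ν d) (x y : Fin 2) :
    ∑ i, w i * guessProb P (τ i) x y ∈ guessSet P ν x y := by
  obtain ⟨i₀⟩ : Nonempty ι := by
    by_contra h
    simp [not_nonempty_iff.1 h] at hw1
  set g : ι → ℕ := fun i => Fintype.equivFin ι i
  have hg : Function.Injective g := Fin.val_injective.comp (Fintype.equivFin ι).injective
  set ω := Function.extend g w 0
  set σ := Function.extend g τ fun _ => τ i₀
  have hextend : ∀ F : (Fin 2 × Fin 2 × Fin 2 × Fin 2 → ℝ) → ℝ,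
      (fun n => ω n * F (σ n)) = Function.extend g (fun i => w i * F (τ i)) 0 := by
    intro F; funext n
    by_cases hn : ∃ i, g i = n
    · obtain ⟨i, rfl⟩ := hn
      simp only [ω, σ, hg.extend_apply]
    · simp [ω, σ, Function.extend_apply' _ _ _ hn]
  have htsum : ∀ F : (Fin 2 × Fin 2 × Fin 2 × Fin 2 → ℝ) → ℝ,
      ∑' n, ω n * F (σ n) = ∑ i, w i * F (τ i) := by
    intro F
    rw [hextend F, tsum_extend_zero hg, tsum_fintype]
  refine ⟨ω, σ, fun n => ?_, fun n => ?_, ?_, fun d => ?_,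
    (htsum fun τ => guessProb P τ x y).symm⟩
  · by_cases hn : ∃ i, g i = n
    · obtain ⟨i, rfl⟩ := hn
      simpa only [ω, hg.extend_apply] using hw0 i
    · simp [ω, Function.extend_apply' _ _ _ hn]
  · by_cases hn : ∃ i, g i = n
    · obtain ⟨i, rfl⟩ := hn
      simpa only [σ, hg.extend_apply] using hτ i
    · simpa [σ, Function.extend_apply' _ _ _ hn] using hτ i₀
  · simpa [hw1] using htsum fun _ => 1
  · rw [← hwν d]
    exact htsum fun τ => τ d

theorem mem_guessSet (hP : ∀ q, 0 < P q) (hν : ν ∈ NS P) (hE : 2 ≤ ∑ d, ν d * chsh P d)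
    (x y : Fin 2) : (6 - ∑ d, ν d * chsh P d) / 4 ∈ guessSet P ν x y := by
  have hc := isNonSignaling_conditional hP hν
  have hc0 := conditional_nonneg hP hν
  rw [sum_mul_chsh] at hE ⊢
  set c := conditional P ν
  have hmem := mem_guessSet_of_fintype (ν := ν) (ι := Option losses) (x := x) (y := y)
    (fun i => i.elim ((chshValue c - 2) / 2) fun l => c l)
    (fun i => i.elim (joint P prBox) fun l => joint P (detBox (lossAlice l) (lossBob l)))
    (fun i => by cases i <;> simp only [Option.elim] <;> [linarith; exact hc0 _])
    (fun i => by
      cases i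
      · exact joint_mem_NS hP isNonSignaling_prBox fun _ => by unfold prBox; positivity
      · exact joint_mem_NS hP (isNonSignaling_detBox _ _) fun _ => by unfold detBox; positivity)
    (by simp only [Fintype.sum_option, Option.elim, sum_coe_sort, hc.sum_losses]; ring)
    (fun d => by
      rw [Fintype.sum_option]
      simp only [Option.elim, joint]
      rw [sum_coe_sort losses fun l => c l * (P d.2.2 * detBox (lossAlice l) (lossBob l) d)]
      simp only [mul_left_comm _ (P d.2.2), ← mul_sum, ← mul_add, ← hc.eq_decomposition d]
      exact congrFun (joint_conditional hP) d)
  convert hmem using 1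
  simp only [Fintype.sum_option, Option.elim, sum_coe_sort, guessProb_joint hP, iSup_prBox,
    iSup_detBox, mul_one, hc.sum_losses]
  ring

theorem guessing_probability_eq_general
    (PXY : Fin 2 × Fin 2 → ℝ) (hPXY : ∀ q, 0 < PXY q)
    (ν : Fin 2 × Fin 2 × Fin 2 × Fin 2 → ℝ) (hν : ν ∈ NS PXY)
    (Ehat : ℝ) (hE : Ehat = ∑ d, ν d * chsh PXY d)
    (hE2 : 2 < Ehat) :
    ∀ x y : Fin 2,
      sSup {r : ℝ | ∃ (ω : ℕ → ℝ) (σe : ℕ → Fin 2 × Fin 2 × Fin 2 × Fin 2 → ℝ),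
          (∀ e, 0 ≤ ω e) ∧ (∀ e, σe e ∈ NS PXY) ∧ (∑' e, ω e) = 1 ∧
          (∀ d, ∑' e, ω e * σe e d = ν d) ∧
          r = ∑' e, ω e * ⨆ ab : Fin 2 × Fin 2, σe e (ab.1, ab.2, x, y) / PXY (x, y)}
        = (6 - Ehat) / 4 ∧
      -Real.logb 2
          (sSup {r : ℝ | ∃ (ω : ℕ → ℝ) (σe : ℕ → Fin 2 × Fin 2 × Fin 2 × Fin 2 → ℝ),
            (∀ e, 0 ≤ ω e) ∧ (∀ e, σe e ∈ NS PXY) ∧ (∑' e, ω e) = 1 ∧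
            (∀ d, ∑' e, ω e * σe e d = ν d) ∧
            r = ∑' e, ω e * ⨆ ab : Fin 2 × Fin 2, σe e (ab.1, ab.2, x, y) / PXY (x, y)})
        = -Real.logb 2 ((6 - Ehat) / 4) := by
  intro x y
  have key : sSup (guessSet PXY ν x y) = (6 - Ehat) / 4 := by
    subst hE
    exact IsGreatest.csSup_eq
      ⟨mem_guessSet hPXY hν hE2.le x y, fun _ hr => le_of_mem_guessSet hPXY hr⟩
  exact ⟨key, congrArg (fun t => -Real.logb 2 t) key⟩

/-- For any non-signaling distribution `ν` with CHSH expectation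
`Ê ∈ (2,4]`, the single-trial guessing probability — the supremum over convex
decompositions `ν = Σ_e ω_e σ_e` into non-signaling distributions of
`Σ_e ω_e max_{ab} σ_e(ab|xy)` — equals `(6 − Ê)/4` for every input `(x,y)`;
hence `H_min(AB|XYE) = −log₂((6 − Ê)/4)`. -/
theorem guessing_probability_eq
    (PXY : Fin 2 × Fin 2 → ℝ) (hPXY : ∀ q, 0 < PXY q)
    (hPXY1 : ∑ q : Fin 2 × Fin 2, PXY q = 1)
    (ν : Fin 2 × Fin 2 × Fin 2 × Fin 2 → ℝ) (hν : ν ∈ NS PXY)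
    (Ehat : ℝ) (hE : Ehat = ∑ d, ν d * chsh PXY d)
    (hE2 : 2 < Ehat) (hE4 : Ehat ≤ 4) :
    ∀ x y : Fin 2,
      sSup {r : ℝ | ∃ (ω : ℕ → ℝ) (σe : ℕ → Fin 2 × Fin 2 × Fin 2 × Fin 2 → ℝ),
          (∀ e, 0 ≤ ω e) ∧ (∀ e, σe e ∈ NS PXY) ∧ (∑' e, ω e) = 1 ∧
          (∀ d, ∑' e, ω e * σe e d = ν d) ∧
          r = ∑' e, ω e * ⨆ ab : Fin 2 × Fin 2, σe e (ab.1, ab.2, x, y) / PXY (x, y)}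
        = (6 - Ehat) / 4 ∧
      -Real.logb 2
          (sSup {r : ℝ | ∃ (ω : ℕ → ℝ) (σe : ℕ → Fin 2 × Fin 2 × Fin 2 × Fin 2 → ℝ),
            (∀ e, 0 ≤ ω e) ∧ (∀ e, σe e ∈ NS PXY) ∧ (∑' e, ω e) = 1 ∧
            (∀ d, ∑' e, ω e * σe e d = ν d) ∧
            r = ∑' e, ω e * ⨆ ab : Fin 2 × Fin 2, σe e (ab.1, ab.2, x, y) / PXY (x, y)})
        = -Real.logb 2 ((6 - Ehat) / 4) :=
  guessing_probability_eq_general PXY hPXY ν hν Ehat hE hE2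

end CHSH18
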